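/- For |q|<1 and each integer n ≥ 0, one has (q;q)_∞ · ∑_{r≥n} (q;q)_r q^r / ((q;q)_{r-n} (q;q)_{r+n+1}) = q^n ∑_{j≥0} (q^{n+1};q)_j q^{(n+1)j}. -/

import Mathlib

/-!
Since `(q;q)_(n+k) / (q;q)_(2n+k+1) = 1 / (q^(n+k+1);q)_(n+1)`, the q-binomial theorem expands
the `k`-th summand on the left as a power series in `q^(n+k+1)` with Gaussian binomial
coefficients `[n+m, n]_q`. The resulting double series converges absolutely, and summing over `k`
first produces Euler's q-exponential `e(x) = ∑ x^k / (q;q)_k` at `x = q^(m+1)`. From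
`(1 - x) e(x) = e(q x)` and `e(q^N) → e(0) = 1` one gets `e(q^(m+1)) = (q;q)_m / (q;q)_∞`, and
`[n+m, n]_q (q;q)_m = (q^(n+1);q)_m` turns the `m`-th term into the right side.
-/

open Finset

noncomputable def qPoch (a q : ℂ) (n : ℕ) : ℂ := ∏ i ∈ Finset.range n, (1 - a * q ^ i)

noncomputable def qInf (q : ℂ) : ℂ := ∏' i : ℕ, (1 - q ^ (i + 1))

def zsgn (m : ℤ) : ℤ := if 0 ≤ m then 1 else -1

open Filter Topology

section Algebra

variable (a q : ℂ)

theorem qPoch_zero : qPoch a q 0 = 1 := prod_range_zero _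

theorem qPoch_succ (n : ℕ) : qPoch a q (n + 1) = qPoch a q n * (1 - a * q ^ n) :=
  prod_range_succ _ n

theorem qPoch_succ' (n : ℕ) : qPoch a q (n + 1) = (1 - a) * qPoch (a * q) q n := by
  simp only [qPoch, prod_range_succ', pow_zero, mul_one, pow_succ', mul_assoc, mul_comm]

theorem qPoch_add (m n : ℕ) : qPoch a q (m + n) = qPoch a q m * qPoch (a * q ^ m) q n := by
  simp only [qPoch, prod_range_add, pow_add, mul_assoc]

theorem qPoch_self_eq_prod (n : ℕ) : qPoch q q n = ∏ i ∈ range n, (1 - q ^ (i + 1)) := by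
  simp only [qPoch, pow_succ']

variable {a q}

theorem qPoch_ne_zero (ha : ‖a‖ < 1) (hq : ‖q‖ ≤ 1) (n : ℕ) : qPoch a q n ≠ 0 := by
  refine prod_ne_zero_iff.2 fun i _ => sub_ne_zero.2 fun h => ?_
  have : ‖a * q ^ i‖ < 1 := by
    rw [norm_mul, norm_pow]
    exact mul_lt_one_of_nonneg_of_lt_one_left (norm_nonneg a) ha (pow_le_one₀ (norm_nonneg q) hq)
  rw [← h, norm_one] at this
  exact lt_irrefl _ this

theorem norm_qPoch_le_two_pow (ha : ‖a‖ ≤ 1) (hq : ‖q‖ ≤ 1) (n : ℕ) :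
    ‖qPoch a q n‖ ≤ 2 ^ n := by
  calc ‖qPoch a q n‖ ≤ ∏ _i ∈ range n, (2 : ℝ) := by
        rw [qPoch, norm_prod]
        refine prod_le_prod (fun _ _ => norm_nonneg _) fun i _ => (norm_sub_le _ _).trans ?_
        rw [norm_one, norm_mul, norm_pow]
        nlinarith [mul_le_one₀ ha (by positivity) (pow_le_one₀ (n := i) (norm_nonneg q) hq)]
    _ = 2 ^ n := by simp

end Algebra

section Convergence

variable {q : ℂ}

theorem norm_pow_succ_lt_one (hq : ‖q‖ < 1) (n : ℕ) : ‖q ^ (n + 1)‖ < 1 := by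
  rw [norm_pow]
  exact pow_lt_one₀ (norm_nonneg q) hq n.succ_ne_zero

theorem qPoch_self_ne_zero (hq : ‖q‖ < 1) (n : ℕ) : qPoch q q n ≠ 0 :=
  qPoch_ne_zero hq hq.le n

theorem summable_norm_pow_succ (hq : ‖q‖ < 1) : Summable fun i : ℕ => ‖q ^ (i + 1)‖ :=
  (summable_nat_add_iff 1).2 (summable_norm_geometric_of_norm_lt_one hq)

theorem hasProd_qInf (hq : ‖q‖ < 1) : HasProd (fun i : ℕ => 1 - q ^ (i + 1)) (qInf q) := by
  have hs : Summable fun i : ℕ => -q ^ (i + 1) := (summable_norm_pow_succ hq).of_norm.neg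
  simpa only [qInf, ← sub_eq_add_neg] using (Complex.multipliable_one_add_of_summable hs).hasProd

theorem qInf_ne_zero (hq : ‖q‖ < 1) : qInf q ≠ 0 := by
  have hne (i : ℕ) : 1 + -q ^ (i + 1) ≠ 0 := by
    rw [← sub_eq_add_neg]
    exact fun h => (norm_pow_succ_lt_one hq i).ne' (by rw [← sub_eq_zero.1 h, norm_one])
  simpa only [qInf, ← sub_eq_add_neg] using
    tprod_one_add_ne_zero_of_summable hne (by simpa using summable_norm_pow_succ hq)

theorem tendsto_qPoch_qInf (hq : ‖q‖ < 1) : Tendsto (qPoch q q) atTop (𝓝 (qInf q)) :=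
  (hasProd_qInf hq).tendsto_prod_nat.congr fun n => (qPoch_self_eq_prod q n).symm

theorem exists_norm_inv_qPoch_le (hq : ‖q‖ < 1) :
    ∃ C, ∀ k, ‖(qPoch q q k)⁻¹‖ ≤ C := by
  obtain ⟨C, hC⟩ := ((tendsto_qPoch_qInf hq).inv₀ (qInf_ne_zero hq)).norm.bddAbove_range
  exact ⟨C, fun k => hC ⟨k, rfl⟩⟩

end Convergence

section QExp

variable {q : ℂ}

noncomputable def qExp (q x : ℂ) : ℂ := ∑' k : ℕ, x ^ k / qPoch q q k

theorem summable_qExp (hq : ‖q‖ < 1) {x : ℂ} (hx : ‖x‖ < 1) :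
    Summable fun k : ℕ => x ^ k / qPoch q q k := by
  obtain ⟨C, hC⟩ := exists_norm_inv_qPoch_le hq
  refine .of_norm_bounded ((summable_geometric_of_lt_one (norm_nonneg x) hx).mul_left C)
    fun k => ?_
  rw [div_eq_mul_inv, norm_mul, norm_pow, mul_comm]
  exact mul_le_mul_of_nonneg_right (hC k) (by positivity)

theorem qExp_zero (q : ℂ) : qExp q 0 = 1 := by
  rw [qExp, tsum_eq_single 0 fun k hk => by simp [zero_pow hk]]
  simp [qPoch_zero]

theorem qExp_sub_qExp_mul (hq : ‖q‖ < 1) {x : ℂ} (hx : ‖x‖ < 1) :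
    qExp q x - qExp q (q * x) = x * qExp q x := by
  have hqx : ‖q * x‖ < 1 := by
    rw [norm_mul]
    exact mul_lt_one_of_nonneg_of_lt_one_right hq.le (norm_nonneg x) hx
  have hs := summable_qExp hq hx
  have hd := hs.sub (summable_qExp hq hqx)
  rw [qExp, qExp, ← hs.tsum_sub (summable_qExp hq hqx), hd.tsum_eq_zero_add, ← tsum_mul_left]
  simp only [pow_zero, sub_self, zero_add]
  refine tsum_congr fun k => ?_
  have hk := qPoch_self_ne_zero hq (k + 1)
  rw [qPoch_succ, mul_ne_zero_iff] at hk
  rw [qPoch_succ]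
  field_simp [hk.1, hk.2]
  ring

theorem qExp_pow_succ (hq : ‖q‖ < 1) (m : ℕ) :
    qExp q (q ^ (m + 1)) = qPoch q q m * qExp q q := by
  induction m with
  | zero => simp [qPoch_zero]
  | succ m ih =>
    have h := qExp_sub_qExp_mul hq (norm_pow_succ_lt_one hq m)
    rw [← pow_succ'] at h
    rw [qPoch_succ]
    linear_combination -h + (1 - q ^ (m + 1)) * ih

theorem tendsto_qExp_pow (hq : ‖q‖ < 1) :
    Tendsto (fun N : ℕ => qExp q (q ^ N)) atTop (𝓝 1) := by
  obtain ⟨C, hC⟩ := exists_norm_inv_qPoch_le hq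
  rw [← qExp_zero q]
  refine tendsto_tsum_of_dominated_convergence (bound := fun k => C * ‖q‖ ^ k)
    ((summable_geometric_of_lt_one (norm_nonneg q) hq).mul_left C)
    (fun k => ((tendsto_pow_atTop_nhds_zero_of_norm_lt_one hq).pow k).div_const _) ?_
  filter_upwards [eventually_ge_atTop 1] with N hN k
  rw [div_eq_mul_inv, norm_mul, mul_comm, norm_pow, norm_pow, ← pow_mul]
  exact mul_le_mul (hC k) (pow_le_pow_of_le_one (norm_nonneg q) hq.le (Nat.le_mul_of_pos_left k hN))
    (by positivity) ((norm_nonneg _).trans (hC k))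

theorem qInf_mul_qExp_self (hq : ‖q‖ < 1) : qInf q * qExp q q = 1 :=
  tendsto_nhds_unique ((tendsto_qPoch_qInf hq).mul_const _)
    (((tendsto_qExp_pow hq).comp (tendsto_add_atTop_nat 1)).congr fun N => qExp_pow_succ hq N)

end QExp

section QBinomial

variable {q : ℂ}

/-- The Gaussian binomial coefficient `[n + m, n]_q`. -/
noncomputable def qBinom (q : ℂ) (n m : ℕ) : ℂ := qPoch (q ^ (m + 1)) q n / qPoch q q n

theorem qBinom_zero_left (q : ℂ) (m : ℕ) : qBinom q 0 m = 1 := by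
  simp [qBinom, qPoch_zero]

theorem qBinom_zero_right (hq : ‖q‖ < 1) (n : ℕ) : qBinom q n 0 = 1 := by
  rw [qBinom, pow_one, div_self (qPoch_self_ne_zero hq n)]

theorem qBinom_succ_succ (hq : ‖q‖ < 1) (n m : ℕ) :
    qBinom q (n + 1) (m + 1) = qBinom q n (m + 1) + q ^ (n + 1) * qBinom q (n + 1) m := by
  have hP := qPoch_self_ne_zero hq (n + 1)
  rw [qPoch_succ, ← pow_succ', mul_ne_zero_iff] at hP
  rw [qBinom, qBinom, qBinom, qPoch_succ (q ^ (m + 1 + 1)), qPoch_succ' (q ^ (m + 1)), qPoch_succ q,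
    ← pow_succ, ← pow_succ']
  field_simp [hP.1, hP.2]
  ring

theorem qBinom_mul_qPoch (hq : ‖q‖ < 1) (n m : ℕ) :
    qBinom q n m * qPoch q q m = qPoch (q ^ (n + 1)) q m := by
  have h := (qPoch_add q q m n).symm.trans (add_comm m n ▸ qPoch_add q q n m)
  rw [← pow_succ', ← pow_succ'] at h
  rw [qBinom, div_mul_eq_mul_div, mul_comm, h, mul_div_cancel_left₀ _ (qPoch_self_ne_zero hq n)]

theorem norm_qBinom_le (hq : ‖q‖ < 1) (n m : ℕ) :
    ‖qBinom q n m‖ ≤ 2 ^ n * ‖(qPoch q q n)⁻¹‖ := by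
  rw [qBinom, div_eq_mul_inv, norm_mul]
  gcongr
  exact norm_qPoch_le_two_pow (norm_pow_succ_lt_one hq m).le hq.le n

theorem summable_qBinom_mul_pow (hq : ‖q‖ < 1) (n : ℕ) {x : ℂ} (hx : ‖x‖ < 1) :
    Summable fun m : ℕ => qBinom q n m * x ^ m := by
  refine .of_norm_bounded
    ((summable_geometric_of_lt_one (norm_nonneg x) hx).mul_left (2 ^ n * ‖(qPoch q q n)⁻¹‖))
    fun m => ?_
  rw [norm_mul, norm_pow]
  exact mul_le_mul_of_nonneg_right (norm_qBinom_le hq n m) (by positivity)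

theorem tsum_qBinom_succ_mul_pow (hq : ‖q‖ < 1) (n : ℕ) {x : ℂ} (hx : ‖x‖ < 1) :
    ∑' m, qBinom q (n + 1) m * x ^ m
      = ∑' m, qBinom q n m * x ^ m + q ^ (n + 1) * x * ∑' m, qBinom q (n + 1) m * x ^ m := by
  have hF := summable_qBinom_mul_pow hq (n + 1) hx
  have hf := summable_qBinom_mul_pow hq n hx
  have hshift : ∑' m, qBinom q (n + 1) (m + 1) * x ^ (m + 1)
      = ∑' m, qBinom q n (m + 1) * x ^ (m + 1)
        + q ^ (n + 1) * x * ∑' m, qBinom q (n + 1) m * x ^ m := by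
    rw [← tsum_mul_left, ← ((summable_nat_add_iff 1).2 hf).tsum_add (hF.mul_left _)]
    exact tsum_congr fun m => by rw [qBinom_succ_succ hq]; ring
  conv_lhs => rw [hF.tsum_eq_zero_add]
  rw [hf.tsum_eq_zero_add, hshift, qBinom_zero_right hq, qBinom_zero_right hq]
  ring

theorem tsum_qBinom_mul_pow (hq : ‖q‖ < 1) (n : ℕ) {x : ℂ} (hx : ‖x‖ < 1) :
    ∑' m, qBinom q n m * x ^ m = (qPoch x q (n + 1))⁻¹ := by
  induction n with
  | zero => simp [qBinom_zero_left, qPoch_succ, qPoch_zero, tsum_geometric_of_norm_lt_one hx]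
  | succ n ih =>
    have h := tsum_qBinom_succ_mul_pow hq n hx
    rw [ih] at h
    rw [qPoch_succ x q (n + 1)]
    refine eq_inv_of_mul_eq_one_left ?_
    linear_combination qPoch x q (n + 1) * h + mul_inv_cancel₀ (qPoch_ne_zero hx hq.le (n + 1))

end QBinomial

section DoubleSeries

variable {q : ℂ}

noncomputable def doubleTerm (q : ℂ) (n k m : ℕ) : ℂ :=
  q ^ (n + k) / qPoch q q k * (qBinom q n m * (q ^ (n + k + 1)) ^ m)

theorem summand_eq_tsum_doubleTerm (hq : ‖q‖ < 1) (n k : ℕ) :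
    qPoch q q (n + k) * q ^ (n + k) / (qPoch q q k * qPoch q q (2 * n + k + 1))
      = ∑' m, doubleTerm q n k m := by
  have hsplit : qPoch q q (2 * n + k + 1)
      = qPoch q q (n + k) * qPoch (q ^ (n + k + 1)) q (n + 1) := by
    rw [show 2 * n + k + 1 = n + k + (n + 1) by ring, qPoch_add, ← pow_succ']
  simp only [doubleTerm]
  rw [tsum_mul_left, tsum_qBinom_mul_pow hq n (norm_pow_succ_lt_one hq _), hsplit]
  field_simp [qPoch_self_ne_zero hq]

theorem summable_doubleTerm (hq : ‖q‖ < 1) (n : ℕ) :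
    Summable (Function.uncurry (doubleTerm q n)) := by
  obtain ⟨C, hC⟩ := exists_norm_inv_qPoch_le hq
  have hgeo := summable_geometric_of_lt_one (norm_nonneg q) hq
  refine .of_norm_bounded ((hgeo.mul_of_nonneg hgeo (fun _ => by positivity)
    fun _ => by positivity).mul_left (C * (2 ^ n * ‖(qPoch q q n)⁻¹‖))) ?_
  rintro ⟨k, m⟩
  have hk : ‖q ^ (n + k)‖ ≤ ‖q‖ ^ k := by
    rw [norm_pow]
    exact pow_le_pow_of_le_one (norm_nonneg q) hq.le (Nat.le_add_left k n)
  have hm : ‖(q ^ (n + k + 1)) ^ m‖ ≤ ‖q‖ ^ m := by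
    rw [norm_pow, norm_pow, ← pow_mul]
    exact pow_le_pow_of_le_one (norm_nonneg q) hq.le (Nat.le_mul_of_pos_left m (Nat.succ_pos _))
  calc ‖doubleTerm q n k m‖
      = ‖q ^ (n + k)‖ * ‖(qPoch q q k)⁻¹‖
          * (‖qBinom q n m‖ * ‖(q ^ (n + k + 1)) ^ m‖) := by
        rw [doubleTerm, div_eq_mul_inv, norm_mul, norm_mul, norm_mul]
    _ ≤ ‖q‖ ^ k * C * (2 ^ n * ‖(qPoch q q n)⁻¹‖ * ‖q‖ ^ m) := by
        gcongr
        · exact mul_nonneg (by positivity) ((norm_nonneg _).trans (hC k))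
        · exact hC k
        · exact norm_qBinom_le hq n m
    _ = C * (2 ^ n * ‖(qPoch q q n)⁻¹‖) * (‖q‖ ^ k * ‖q‖ ^ m) := by ring

theorem qInf_mul_tsum_doubleTerm (hq : ‖q‖ < 1) (n m : ℕ) :
    qInf q * ∑' k, doubleTerm q n k m
      = q ^ n * (qPoch (q ^ (n + 1)) q m * q ^ ((n + 1) * m)) := by
  have h (k : ℕ) : doubleTerm q n k m
      = q ^ n * qBinom q n m * q ^ ((n + 1) * m) * ((q ^ (m + 1)) ^ k / qPoch q q k) := by
    rw [doubleTerm]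
    ring
  rw [tsum_congr h, tsum_mul_left, ← qExp, qExp_pow_succ hq, ← qBinom_mul_qPoch hq]
  linear_combination
    (q ^ n * qBinom q n m * q ^ ((n + 1) * m) * qPoch q q m) * qInf_mul_qExp_self hq

end DoubleSeries

theorem stmt1 (q : ℂ) (hq : ‖q‖ < 1) (n : ℕ) :
    qInf q * ∑' k : ℕ, qPoch q q (n + k) * q ^ (n + k)
        / (qPoch q q k * qPoch q q (2 * n + k + 1))
      = q ^ n * ∑' j : ℕ, qPoch (q ^ (n + 1)) q j * q ^ ((n + 1) * j) := by
  calc _ = qInf q * ∑' m, ∑' k, doubleTerm q n k m := by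
        rw [tsum_congr (summand_eq_tsum_doubleTerm hq n), (summable_doubleTerm hq n).tsum_comm]
    _ = ∑' m, q ^ n * (qPoch (q ^ (n + 1)) q m * q ^ ((n + 1) * m)) := by
        rw [← tsum_mul_left]
        exact tsum_congr (qInf_mul_tsum_doubleTerm hq n)
    _ = _ := tsum_mul_left
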